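/- arXiv:2503.00759 — 9 statements merged into one kernel-verified Lean document; each statement's English description precedes it below -/
import Mathlib

section
/- The endomorphism graph of the cyclic group ZMod 4 and the endomorphism graph of the Klein four group ZMod 2 × ZMod 2 are both equal to the complete graph on their vertex sets; consequently these two non-isomorphic groups have isomorphic endomorphism graphs (there is a graph isomorphism Endo(ZMod 4) ≃g Endo(ZMod 2 × ZMod 2)). -/
/-- The endomorphism graph of an additive group `G`: distinct `a b` are adjacent iff some
additive group endomorphism maps `a` to `b` or `b` to `a`. -/
def endoGraph (G : Type*) [AddGroup G] : SimpleGraph G :=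
  SimpleGraph.fromRel (fun a b => ∃ f : G →+ G, f a = b)

private def kleinMap (p q r s : ZMod 2) : (ZMod 2 × ZMod 2) →+ (ZMod 2 × ZMod 2) where
  toFun v := (p * v.1 + q * v.2, r * v.1 + s * v.2)
  map_zero' := by simp
  map_add' x y := by
    simp only [Prod.fst_add, Prod.snd_add, Prod.mk_add_mk, Prod.mk.injEq]
    constructor <;> ring

private lemma zmod4_complete : endoGraph (ZMod 4) = ⊤ := by
  ext a b
  simp only [endoGraph, SimpleGraph.fromRel_adj, SimpleGraph.top_adj]
  constructor
  · exact fun h => h.1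
  · intro hab
    refine ⟨hab, ?_⟩
    have h : ∃ c : ZMod 4, c * a = b ∨ c * b = a := by revert hab; revert a b; decide
    obtain ⟨c, hc⟩ := h
    rcases hc with hc | hc
    · exact Or.inl ⟨AddMonoidHom.mulLeft c, hc⟩
    · exact Or.inr ⟨AddMonoidHom.mulLeft c, hc⟩

private lemma klein_complete : endoGraph (ZMod 2 × ZMod 2) = ⊤ := by
  ext a b
  simp only [endoGraph, SimpleGraph.fromRel_adj, SimpleGraph.top_adj]
  constructor
  · exact fun h => h.1
  · intro hab
    refine ⟨hab, ?_⟩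
    have h : ∃ p q r s : ZMod 2,
        (p * a.1 + q * a.2, r * a.1 + s * a.2) = b ∨
        (p * b.1 + q * b.2, r * b.1 + s * b.2) = a := by
      revert hab; revert a b; decide
    obtain ⟨p, q, r, s, hc⟩ := h
    rcases hc with hc | hc
    · exact Or.inl ⟨kleinMap p q r s, hc⟩
    · exact Or.inr ⟨kleinMap p q r s, hc⟩

/-- The endomorphism graphs of `ZMod 4` and of the Klein four group `ZMod 2 × ZMod 2` are both
complete; in particular these non-isomorphic groups have isomorphic endomorphism graphs. -/
theorem endoGraph_zmod4_and_klein_complete :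
    endoGraph (ZMod 4) = ⊤ ∧ endoGraph (ZMod 2 × ZMod 2) = ⊤ ∧
      Nonempty (endoGraph (ZMod 4) ≃g endoGraph (ZMod 2 × ZMod 2)) := by
  refine ⟨zmod4_complete, klein_complete, ?_⟩
  rw [zmod4_complete, klein_complete]
  have e : ZMod 4 ≃ ZMod 2 × ZMod 2 := by
    apply Fintype.equivOfCardEq
    simp
  exact ⟨SimpleGraph.Iso.completeGraph e⟩
end

section
/- Let G be a finite abelian group. Then there exists an element a ∈ G such that for every b ∈ G there is a group endomorphism f : G →* G with f(a) = b. (Equivalently, the directed endomorphism graph of a finite abelian group has a single point basis.) -/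
/-- The directed endomorphism graph of a finite abelian group has a single point basis:
there is an element `a` such that every element is the image of `a` under some endomorphism. -/
theorem exists_single_point_basis_of_comm (G : Type*) [CommGroup G] [Finite G] :
    ∃ a : G, ∀ b : G, ∃ f : G →* G, f a = b := by
  obtain ⟨ι, _, n, hn, ⟨e⟩⟩ := CommGroup.equiv_prod_multiplicative_zmod_of_finite G
  refine ⟨e.symm (fun i => Multiplicative.ofAdd (1 : ZMod (n i))), fun b => ?_⟩
  -- componentwise multiplication by `(e b) i`
  let F : (∀ i, Multiplicative (ZMod (n i))) →* (∀ i, Multiplicative (ZMod (n i))) :=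
    Pi.monoidHom fun i =>
      (AddMonoidHom.toMultiplicative
        (AddMonoidHom.mulRight (Multiplicative.toAdd ((e b) i)))).comp
        (Pi.evalMonoidHom _ i)
  refine ⟨(e.symm.toMonoidHom.comp F).comp e.toMonoidHom, ?_⟩
  simp only [MonoidHom.comp_apply, MulEquiv.coe_toMonoidHom, MulEquiv.apply_symm_apply]
  have : F (fun i => Multiplicative.ofAdd (1 : ZMod (n i))) = e b := by
    funext i
    simp [F, Pi.monoidHom, Pi.evalMonoidHom]
  rw [this, MulEquiv.symm_apply_apply]
end

section
/- In the quaternion group Q₈ (the group QuaternionGroup 2) there exists an element a such that for every b ∈ Q₈ there is a group endomorphism f : Q₈ →* Q₈ with f(a) = b. Thus a non-abelian group can also have a directed endomorphism graph with a single point basis, so the converse of the statement 'abelian implies single point basis' fails. -/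
/-- Candidate endomorphism of `Q₈` sending `a r ↦ b ^ r` and `xa r ↦ c * b ^ r`. -/
def quatF (b c : QuaternionGroup 2) : QuaternionGroup 2 → QuaternionGroup 2
  | .a r => b ^ r.val
  | .xa r => c * b ^ r.val

/-- Choice of image of `xa 0` making `quatF` a homomorphism. -/
def quatC : QuaternionGroup 2 → QuaternionGroup 2
  | .a r => if r.val % 2 = 0 then 1 else .xa 0
  | .xa _ => .a 1

lemma quatF_mul : ∀ b x y : QuaternionGroup 2,
    quatF b (quatC b) (x * y) = quatF b (quatC b) x * quatF b (quatC b) y := by decide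

lemma quatF_a_one : ∀ b : QuaternionGroup 2, quatF b (quatC b) (.a 1) = b := by decide

lemma quatF_one : ∀ b : QuaternionGroup 2, quatF b (quatC b) 1 = 1 := by decide

/-- The quaternion group `Q₈` is non-abelian, yet its directed endomorphism graph has a single
point basis: some element can be mapped to every element by an endomorphism. -/
theorem quaternionGroup_single_point_basis :
    ∃ a : QuaternionGroup 2, ∀ b : QuaternionGroup 2,
      ∃ f : QuaternionGroup 2 →* QuaternionGroup 2, f a = b := by
  refine ⟨.a 1, fun b => ⟨⟨⟨quatF b (quatC b), quatF_one b⟩, quatF_mul b⟩, quatF_a_one b⟩⟩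
end

section
/- Let n ≥ 1. The number of edges of the endomorphism graph Endo(ZMod n) equals (n choose 2) minus the sum, over all pairs of divisors d₁, d₂ of n with d₁ < d₂ and d₁ ∤ d₂, of φ(d₁)·φ(d₂), where φ is Euler's totient function. Formally: (Endo(ZMod n)).edgeFinset.card = n.choose 2 - ∑_{d₁ ∈ n.divisors} ∑_{d₂ ∈ n.divisors, d₁ < d₂, ¬ d₁ ∣ d₂} φ(d₁) · φ(d₂). -/
/-! In a finite cyclic group every endomorphism is multiplication by an integer, so some
endomorphism maps `a` to `b` iff `b` is a multiple of `a`, iff `addOrderOf b ∣ addOrderOf a`.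
Hence `a` and `b` are non-adjacent in `Endo(ZMod n)` exactly when their orders are incomparable
under divisibility. Orienting each such pair from the smaller order to the larger one, and using
that `ZMod n` has `φ d` elements of order `d` for each `d ∣ n`, the complement graph has
`∑ φ(d₁) φ(d₂)` edges; the edges of `Endo(ZMod n)` are the remaining ones of `K_n`. -/

attribute [local instance] Classical.propDecidable

open Finset

namespace IsAddCyclic

section

variable {G : Type*} [AddCommGroup G] [IsAddCyclic G]

theorem exists_addMonoidHom_apply_eq_iff_mem_zmultiples (a b : G) :
    (∃ f : G →+ G, f a = b) ↔ b ∈ AddSubgroup.zmultiples a := by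
  constructor
  · rintro ⟨f, rfl⟩
    obtain ⟨m, hm⟩ := f.map_addCyclic
    exact ⟨m, (hm a).symm⟩
  · rintro ⟨m, rfl⟩
    exact ⟨zsmulAddGroupHom m, rfl⟩

-- The elements killed by `addOrderOf a` form a subgroup of order `addOrderOf a`, so they are
-- exactly the multiples of `a`.
theorem mem_zmultiples_iff_addOrderOf_dvd [Finite G] (a b : G) :
    b ∈ AddSubgroup.zmultiples a ↔ addOrderOf b ∣ addOrderOf a := by
  refine ⟨addOrderOf_dvd_of_mem_zmultiples, fun hba => ?_⟩
  have hle : AddSubgroup.zmultiples a ≤ (nsmulAddMonoidHom (addOrderOf a) : G →+ G).ker :=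
    (AddSubgroup.zmultiples_le).2 (addOrderOf_nsmul_eq_zero a)
  have hcard : Nat.card (nsmulAddMonoidHom (addOrderOf a) : G →+ G).ker ≤
      Nat.card (AddSubgroup.zmultiples a) := by
    rw [card_nsmulAddMonoidHom_ker, Nat.card_zmultiples,
      Nat.gcd_eq_right (addOrderOf_dvd_natCard a)]
  rw [AddSubgroup.eq_of_le_of_card_ge hle hcard]
  exact addOrderOf_dvd_iff_nsmul_eq_zero.1 hba

theorem exists_addMonoidHom_apply_eq_iff_addOrderOf_dvd [Finite G] (a b : G) :
    (∃ f : G →+ G, f a = b) ↔ addOrderOf b ∣ addOrderOf a := by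
  rw [exists_addMonoidHom_apply_eq_iff_mem_zmultiples, mem_zmultiples_iff_addOrderOf_dvd]

end

variable {G : Type*} [AddGroup G] [Fintype G] [IsAddCyclic G]

theorem sum_comp_addOrderOf {M : Type*} [AddCommMonoid M] (f : ℕ → M) :
    ∑ x : G, f (addOrderOf x) = ∑ d ∈ (Fintype.card G).divisors, d.totient • f d := by
  have hmaps : ∀ x ∈ (univ : Finset G), addOrderOf x ∈ (Fintype.card G).divisors := fun x _ =>
    Nat.mem_divisors.2 ⟨addOrderOf_dvd_card, Fintype.card_ne_zero⟩
  rw [← sum_fiberwise_of_maps_to hmaps]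
  refine sum_congr rfl fun d hd => ?_
  rw [sum_congr rfl fun x hx => by rw [(mem_filter.1 hx).2], sum_const,
    card_addOrderOf_eq_totient (Nat.dvd_of_mem_divisors hd)]

theorem card_filter_addOrderOf_pair (P : ℕ → ℕ → Prop) [DecidableRel P] :
    #{p : G × G | P (addOrderOf p.1) (addOrderOf p.2)} =
      ∑ d₁ ∈ (Fintype.card G).divisors, ∑ d₂ ∈ (Fintype.card G).divisors with P d₁ d₂,
        d₁.totient * d₂.totient := by
  rw [card_filter, Fintype.sum_prod_type,
    sum_comp_addOrderOf fun d₁ => ∑ y : G, if P d₁ (addOrderOf y) then 1 else 0]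
  refine sum_congr rfl fun d₁ _ => ?_
  rw [sum_comp_addOrderOf fun d₂ => if P d₁ d₂ then 1 else 0, sum_filter, smul_sum]
  simp only [smul_eq_mul, mul_ite, mul_one, mul_zero]

end IsAddCyclic

namespace SimpleGraph

variable {V : Type*} [Fintype V] (H : SimpleGraph V) [DecidableRel H.Adj]

theorem card_edgeFinset_add_card_edgeFinset_compl [DecidableEq V] :
    #H.edgeFinset + #Hᶜ.edgeFinset = (Fintype.card V).choose 2 := by
  have hsub : H.edgeFinset ⊆ (⊤ : SimpleGraph V).edgeFinset :=
    edgeFinset_subset_edgeFinset.2 le_top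
  have hcompl : Hᶜ.edgeFinset = (⊤ : SimpleGraph V).edgeFinset \ H.edgeFinset := by
    ext e
    simp only [mem_sdiff, mem_edgeFinset, ← Set.mem_sdiff, ← edgeSet_sdiff, top_sdiff]
  rw [hcompl, card_sdiff_of_subset hsub, Nat.add_sub_cancel' (card_le_card hsub),
    card_edgeFinset_top_eq_card_choose_two]

theorem card_edgeFinset_eq_card_filter_lt {α : Type*} [LinearOrder α] (o : V → α)
    (ho : ∀ x y, H.Adj x y → o x ≠ o y) :
    #H.edgeFinset = #{p : V × V | H.Adj p.1 p.2 ∧ o p.1 < o p.2} := by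
  symm
  refine card_bij (fun p _ => s(p.1, p.2)) (fun p hp => ?_) (fun p hp q hq hpq => ?_)
    fun e he => ?_
  · simpa using (mem_filter.1 hp).2.1
  · have hp := (mem_filter.1 hp).2.2
    have hq := (mem_filter.1 hq).2.2
    rcases Sym2.eq_iff.1 hpq with ⟨h₁, h₂⟩ | ⟨h₁, h₂⟩
    · exact Prod.ext h₁ h₂
    · rw [h₁, h₂] at hp
      exact absurd (hp.trans hq) (lt_irrefl _)
  · induction e using Sym2.ind with
    | h x y =>
      have hxy : H.Adj x y := by simpa using he
      rcases (ho x y hxy).lt_or_gt with hlt | hgt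
      · exact ⟨(x, y), by simp [hxy, hlt], rfl⟩
      · exact ⟨(y, x), by simp [hxy.symm, hgt], Sym2.eq_swap⟩

end SimpleGraph

section EndoGraph

variable {G : Type*} [AddCommGroup G] [IsAddCyclic G]

theorem endoGraph_compl_adj_iff [Finite G] {a b : G} :
    (endoGraph G)ᶜ.Adj a b ↔ ¬ addOrderOf a ∣ addOrderOf b ∧ ¬ addOrderOf b ∣ addOrderOf a := by
  rw [SimpleGraph.compl_adj, endoGraph, SimpleGraph.fromRel_adj,
    IsAddCyclic.exists_addMonoidHom_apply_eq_iff_addOrderOf_dvd,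
    IsAddCyclic.exists_addMonoidHom_apply_eq_iff_addOrderOf_dvd]
  have hrefl : a = b → addOrderOf a ∣ addOrderOf b := fun hab => hab ▸ dvd_rfl
  tauto

theorem card_edgeFinset_compl_endoGraph [Fintype G] [DecidableEq G]
    [DecidableRel (endoGraph G).Adj] :
    #(endoGraph G)ᶜ.edgeFinset =
      ∑ d₁ ∈ (Fintype.card G).divisors, ∑ d₂ ∈ (Fintype.card G).divisors with
        d₁ < d₂ ∧ ¬ d₁ ∣ d₂, d₁.totient * d₂.totient := by
  have hne : ∀ x y : G, (endoGraph G)ᶜ.Adj x y → addOrderOf x ≠ addOrderOf y := fun x y h hxy =>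
    (endoGraph_compl_adj_iff.1 h).1 (hxy ▸ dvd_rfl)
  rw [SimpleGraph.card_edgeFinset_eq_card_filter_lt _ addOrderOf hne,
    ← IsAddCyclic.card_filter_addOrderOf_pair]
  congr! 2 with p
  rw [endoGraph_compl_adj_iff]
  have hlt : addOrderOf p.1 < addOrderOf p.2 → ¬ addOrderOf p.2 ∣ addOrderOf p.1 :=
    Nat.not_dvd_of_pos_of_lt (addOrderOf_pos p.1)
  tauto

end EndoGraph

/-- The number of edges of `Endo(ZMod n)` is `C(n,2)` minus the sum of `φ(d₁)·φ(d₂)` over pairs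
of divisors `d₁ < d₂` of `n` with `d₁ ∤ d₂`. -/
theorem endoGraph_zmod_card_edges (n : ℕ) [NeZero n] :
    (endoGraph (ZMod n)).edgeFinset.card =
      n.choose 2 - ∑ d₁ ∈ n.divisors, ∑ d₂ ∈ n.divisors with d₁ < d₂ ∧ ¬ d₁ ∣ d₂,
        d₁.totient * d₂.totient := by
  have hsplit := SimpleGraph.card_edgeFinset_add_card_edgeFinset_compl (endoGraph (ZMod n))
  rw [card_edgeFinset_compl_endoGraph, ZMod.card] at hsplit
  omega
end

section
/- Let n ≥ 1 with prime factorization n = p₁^{n₁} ⋯ p_k^{n_k}. The number of maximal cliques of the endomorphism graph Endo(ZMod n) equals the multinomial coefficient (n₁ + n₂ + ⋯ + n_k)! / (n₁! n₂! ⋯ n_k!). Formally, the number of sets s ⊆ ZMod n that are maximal with respect to being a clique of Endo(ZMod n) equals Nat.multinomial n.primeFactors (fun p => n.factorization p). -/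
open Function Set
open scoped Nat

namespace Nat

theorem factorial_mul_multinomial_update_pred {α : Type*} [DecidableEq α] {s : Finset α}
    {f : α → ℕ} {a : α} (ha : a ∈ s) (hfa : f a ≠ 0) :
    (∏ i ∈ s, (f i)!) * multinomial s (update f a (f a - 1)) = f a * (∑ i ∈ s, f i - 1)! := by
  have hprod : ∏ i ∈ s, (f i)! = f a * ∏ i ∈ s, (update f a (f a - 1) i)! := by
    simp only [apply_update (fun _ k => k !)]
    rw [Finset.prod_update_of_mem ha, Finset.prod_eq_mul_prod_sdiff_singleton_of_mem ha,
      ← mul_assoc, Nat.mul_factorial_pred hfa]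
  have hsum : ∑ i ∈ s, update f a (f a - 1) i = ∑ i ∈ s, f i - 1 := by
    rw [Finset.sum_update_of_mem ha, Finset.sum_eq_add_sum_sdiff_singleton_of_mem ha]
    omega
  rw [hprod, mul_assoc, multinomial_spec, hsum]

theorem multinomial_eq_sum_multinomial_update_pred {α : Type*} [DecidableEq α] {s : Finset α}
    {f : α → ℕ} (hs : s.Nonempty) (hf : ∀ a ∈ s, f a ≠ 0) :
    multinomial s f = ∑ a ∈ s, multinomial s (update f a (f a - 1)) := by
  obtain ⟨a, ha⟩ := hs
  have hsum : ∑ i ∈ s, f i ≠ 0 :=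
    (Finset.sum_pos (fun i hi => Nat.pos_of_ne_zero (hf i hi)) ⟨a, ha⟩).ne'
  refine Nat.eq_of_mul_eq_mul_left (Finset.prod_pos (s := s) fun i _ => (f i).factorial_pos) ?_
  rw [multinomial_spec, Finset.mul_sum,
    Finset.sum_congr rfl fun a ha => factorial_mul_multinomial_update_pred ha (hf a ha),
    ← Finset.sum_mul, Nat.mul_factorial_pred hsum]

end Nat

theorem IsChain.exists_isGreatest_of_finite {α : Type*} [Preorder α] {s : Set α}
    (hs : IsChain (· ≤ ·) s) (hfin : s.Finite) (hne : s.Nonempty) : ∃ y, IsGreatest s y := by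
  obtain ⟨y, hy⟩ := hfin.exists_maximal hne
  exact ⟨y, hy.1, fun b hb => (hs.total hb hy.1).elim id fun hyb => hy.2 hb hyb⟩

section MaxChains

variable {α : Type*}

abbrev IsMaxChainIn [Preorder α] (S c : Set α) : Prop :=
  Maximal (fun t => t ⊆ S ∧ IsChain (· ≤ ·) t) c

variable [PartialOrder α] {x y : α} {c : Set α}

theorem IsMaxChainIn.top_mem (hc : IsMaxChainIn (Iic x) c) : x ∈ c :=
  hc.mem_of_prop_insert ⟨insert_subset le_rfl hc.1.1,
    hc.1.2.insert fun _ hb _ => Or.inr (hc.1.1 hb)⟩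

theorem isMaxChainIn_Iic_iff_of_isMin (hx : IsMin x) : IsMaxChainIn (Iic x) c ↔ c = {x} := by
  refine ⟨fun hc => (hx.Iic_eq ▸ hc.1.1).antisymm (singleton_subset_iff.2 hc.top_mem), ?_⟩
  rintro rfl
  rw [hx.Iic_eq]
  exact ⟨⟨subset_rfl, IsChain.singleton⟩, fun t ht _ => ht.1⟩

theorem IsMaxChainIn.insert_of_covBy (hc : IsMaxChainIn (Iic y) c) (hyx : y ⋖ x) :
    IsMaxChainIn (Iic x) (insert x c) := by
  have hcx : ∀ b ∈ c, b ≤ x := fun b hb => (hc.1.1 hb).trans hyx.le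
  refine ⟨⟨insert_subset le_rfl hcx, hc.1.2.insert fun b hb _ => Or.inr (hcx b hb)⟩,
    fun t ht hct z hz => ?_⟩
  have hyt : y ∈ t := hct (mem_insert_of_mem _ hc.top_mem)
  rcases eq_or_ne z y with rfl | hzy
  · exact mem_insert_of_mem _ hc.top_mem
  rcases ht.2 hz hyt hzy with hzy' | hyz
  · refine mem_insert_of_mem _ (hc.mem_of_prop_insert ⟨insert_subset hzy' hc.1.1, ?_⟩)
    exact hc.1.2.insert fun b hb hzb => ht.2 hz (hct (mem_insert_of_mem _ hb)) hzb
  · rw [(hyx.eq_or_eq hyz (ht.1 hz)).resolve_left hzy]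
    exact mem_insert _ _

theorem IsMaxChainIn.exists_covBy_diff_singleton (hc : IsMaxChainIn (Iic x) c)
    (hfin : (Iic x).Finite) (hx : ¬IsMin x) :
    ∃ y, y ⋖ x ∧ IsMaxChainIn (Iic y) (c \ {x}) := by
  have hchain : IsChain (· ≤ ·) (c \ {x}) := hc.1.2.mono sdiff_subset
  have hne : (c \ {x}).Nonempty := by
    obtain ⟨z, hzx⟩ := not_isMin_iff.1 hx
    by_contra! hempty
    have hzc : z ∈ c := hc.mem_of_prop_insert ⟨insert_subset hzx.le hc.1.1,
      hc.1.2.insert fun b hb _ => Or.inl ((sdiff_eq_empty.1 hempty hb).symm ▸ hzx.le)⟩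
    exact hzx.ne (sdiff_eq_empty.1 hempty hzc)
  obtain ⟨y, ⟨hyc, hyx⟩, hgreat⟩ :=
    hchain.exists_isGreatest_of_finite ((hfin.subset hc.1.1).sdiff) hne
  have hlt : y < x := (hc.1.1 hyc).lt_of_ne hyx
  have hcy : c \ {x} ⊆ Iic y := fun b hb => hgreat hb
  refine ⟨y, ⟨hlt, fun z hyz hzx => ?_⟩, ⟨hcy, hchain⟩, fun t ht hct => ?_⟩
  · have hzc : z ∈ c := hc.mem_of_prop_insert ⟨insert_subset hzx.le hc.1.1,
      hc.1.2.insert fun b hb _ => ?_⟩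
    · exact hyz.not_ge (hgreat ⟨hzc, hzx.ne⟩)
    rcases eq_or_ne b x with rfl | hbx
    · exact Or.inl hzx.le
    · exact Or.inr ((hgreat ⟨hb, hbx⟩).trans hyz.le)
  · have htx : insert x t ⊆ c := hc.2 ⟨insert_subset le_rfl fun b hb => (ht.1 hb).trans hlt.le,
      ht.2.insert fun b hb _ => Or.inr ((ht.1 hb).trans hlt.le)⟩
      (fun b hb => by
        rcases eq_or_ne b x with rfl | hbx
        · exact mem_insert _ _
        · exact mem_insert_of_mem _ (hct ⟨hb, hbx⟩))
    exact fun b hb => ⟨htx (mem_insert_of_mem _ hb), ((ht.1 hb).trans_lt hlt).ne⟩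

theorem IsMaxChainIn.insert_sdiff_of_lt (hc : IsMaxChainIn (Iic y) c) (hyx : y < x) :
    insert x c \ {x} = c :=
  insert_sdiff_self_of_notMem fun hxc => (hc.1.1 hxc).not_gt hyx

theorem ncard_setOf_isMaxChainIn_Iic_eq_finsum (hfin : (Iic x).Finite) (hx : ¬IsMin x) :
    {c | IsMaxChainIn (Iic x) c}.ncard =
      ∑ᶠ y ∈ {y | y ⋖ x}, {c | IsMaxChainIn (Iic y) c}.ncard := by
  have hunion : {c | IsMaxChainIn (Iic x) c} =
      ⋃ y ∈ {y | y ⋖ x}, insert x '' {c | IsMaxChainIn (Iic y) c} := by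
    ext c
    simp only [mem_ofPred_eq, mem_iUnion, mem_image, exists_prop]
    constructor
    · intro hc
      obtain ⟨y, hyx, hy⟩ := hc.exists_covBy_diff_singleton hfin hx
      exact ⟨y, hyx, c \ {x}, hy, insert_sdiff_singleton.trans (insert_eq_of_mem hc.top_mem)⟩
    · rintro ⟨y, hyx, c, hc, rfl⟩
      exact hc.insert_of_covBy hyx
  have hfinite : ∀ y ∈ {y | y ⋖ x}, (insert x '' {c | IsMaxChainIn (Iic y) c}).Finite :=
    fun y hy => ((hfin.subset (Iic_subset_Iic.2 hy.le)).finite_subsets.subset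
      fun c hc => hc.1.1).image _
  have hdisj :
      {y | y ⋖ x}.PairwiseDisjoint fun y => insert x '' {c | IsMaxChainIn (Iic y) c} := by
    intro y₁ hy₁ y₂ hy₂ hne
    refine disjoint_left.2 ?_
    rintro _ ⟨c₁, h₁, rfl⟩ ⟨c₂, h₂, heq⟩
    have hc : c₂ = c₁ := by
      rw [← h₂.insert_sdiff_of_lt hy₂.lt, heq, h₁.insert_sdiff_of_lt hy₁.lt]
    subst hc
    exact hne ((h₂.1.1 h₁.top_mem).antisymm (h₁.1.1 h₂.top_mem))
  rw [hunion, Finite.ncard_biUnion (hfin.subset fun y hy => hy.le) hfinite hdisj]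
  refine finsum_mem_congr rfl fun y hy => InjOn.ncard_image fun c₁ h₁ c₂ h₂ heq => ?_
  rw [← h₁.insert_sdiff_of_lt hy.lt, heq, h₂.insert_sdiff_of_lt hy.lt]

end MaxChains

namespace Finsupp

variable {ι : Type*} {f g : ι →₀ ℕ} {a : ι}

theorem tsub_single_one_apply [DecidableEq ι] (i : ι) :
    (f - single a 1 : ι →₀ ℕ) i = if i = a then f a - 1 else f i := by
  rcases eq_or_ne i a with rfl | hi <;> simp [*]

theorem multinomial_eq_sum_multinomial_tsub_single (hf : f ≠ 0) :
    f.multinomial = ∑ a ∈ f.support, (f - single a 1).multinomial := by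
  classical
  rw [multinomial_eq, Nat.multinomial_eq_sum_multinomial_update_pred
    (support_nonempty_iff.2 hf) fun a => mem_support_iff.1]
  refine Finset.sum_congr rfl fun a _ => ?_
  rw [multinomial_eq_of_support_subset support_tsub]
  congr 1
  ext i
  rw [tsub_single_one_apply, Function.update_apply]

theorem tsub_single_one_covBy (ha : a ∈ f.support) : f - single a 1 ⋖ f := by
  classical
  have hfa : f a ≠ 0 := mem_support_iff.1 ha
  refine ⟨lt_of_le_of_ne tsub_le_self fun h => ?_, fun g hlt hgt => ?_⟩
  · have := DFunLike.congr_fun h a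
    rw [tsub_single_one_apply, if_pos rfl] at this
    omega
  · rcases lt_or_ge (g a) (f a) with hga | hga
    · refine hlt.not_ge fun i => ?_
      rw [tsub_single_one_apply]
      split_ifs with hi
      · subst hi; omega
      · exact hgt.le i
    · refine hgt.not_ge fun i => ?_
      rcases eq_or_ne i a with rfl | hi
      · exact hga
      · simpa [tsub_single_one_apply, hi] using hlt.le i

theorem covBy_iff_exists_tsub_single_one : g ⋖ f ↔ ∃ a ∈ f.support, f - single a 1 = g := by
  classical
  refine ⟨fun h => ?_, by rintro ⟨a, ha, rfl⟩; exact tsub_single_one_covBy ha⟩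
  obtain ⟨a, hga⟩ : ∃ a, g a < f a := by
    by_contra! hfg
    exact h.lt.not_ge fun i => hfg i
  have hle : g ≤ f - single a 1 := fun i => by
    rw [tsub_single_one_apply]
    split_ifs with hi
    · subst hi; omega
    · exact h.le i
  have ha : a ∈ f.support := mem_support_iff.2 (by omega)
  exact ⟨a, ha, (hle.lt_or_eq.resolve_left fun hlt => h.2 hlt (tsub_single_one_covBy ha).lt).symm⟩

theorem ncard_setOf_isMaxChainIn_Iic (f : ι →₀ ℕ) :
    {c | IsMaxChainIn (Set.Iic f) c}.ncard = f.multinomial := by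
  classical
  induction f using WellFoundedLT.induction with
  | ind f ih =>
  rcases eq_or_ne f 0 with rfl | hf
  · rw [show {c | IsMaxChainIn (Set.Iic (0 : ι →₀ ℕ)) c} = {{0}} from
      Set.ext fun c => isMaxChainIn_Iic_iff_of_isMin isMin_bot]
    simp [multinomial]
  have hcovers : {g | g ⋖ f} = (fun a => f - single a 1) '' f.support :=
    Set.ext fun g => covBy_iff_exists_tsub_single_one
  have hinj : Set.InjOn (fun a => f - single a 1) f.support := by
    intro a ha b _ hab
    by_contra hne
    have := DFunLike.congr_fun hab a
    rw [tsub_single_one_apply, tsub_single_one_apply, if_pos rfl, if_neg hne] at this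
    exact mem_support_iff.1 ha (by omega)
  rw [ncard_setOf_isMaxChainIn_Iic_eq_finsum (Set.finite_Iic f) (not_isMin_iff_ne_bot.2 hf),
    hcovers, finsum_mem_image hinj, finsum_mem_coe_finset,
    multinomial_eq_sum_multinomial_tsub_single hf]
  exact Finset.sum_congr rfl fun a ha => ih _ (tsub_single_one_covBy ha).lt

end Finsupp

section Transfer

variable {α β : Type*} [Preorder β] {r : α → α → Prop} {f : α → β}

theorem isChain_iff_isChain_image (hf : ∀ a b, r a b ↔ f a ≤ f b) {s : Set α} :
    IsChain r s ↔ IsChain (· ≤ ·) (f '' s) := by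
  refine ⟨IsChain.image_of_map_rel _ _ _ fun a b => (hf a b).1, fun h a ha b hb _ => ?_⟩
  rcases eq_or_ne (f a) (f b) with heq | hne
  · exact Or.inl ((hf a b).2 heq.le)
  · exact (h (mem_image_of_mem f ha) (mem_image_of_mem f hb) hne).imp (hf a b).2 (hf b a).2

theorem Maximal.preimage_image_eq_of_isChain (hf : ∀ a b, r a b ↔ f a ≤ f b) {s : Set α}
    (hs : Maximal (IsChain r) s) : f ⁻¹' (f '' s) = s := by
  refine (subset_preimage_image f s).antisymm' fun a ⟨b, hb, hba⟩ => hs.mem_of_prop_insert ?_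
  rw [isChain_iff_isChain_image hf, image_insert_eq, ← hba,
    insert_eq_of_mem (mem_image_of_mem f hb)]
  exact (isChain_iff_isChain_image hf).1 hs.1

theorem Maximal.isMaxChainIn_range_image (hf : ∀ a b, r a b ↔ f a ≤ f b) {s : Set α}
    (hs : Maximal (IsChain r) s) : IsMaxChainIn (range f) (f '' s) := by
  refine ⟨⟨image_subset_range f s, (isChain_iff_isChain_image hf).1 hs.1⟩, fun t ht hst => ?_⟩
  have hpre : f ⁻¹' t ⊆ s := hs.2
    ((isChain_iff_isChain_image hf).2 ((image_preimage_eq_of_subset ht.1).symm ▸ ht.2))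
    (image_subset_iff.1 hst)
  exact (image_preimage_eq_of_subset ht.1).symm.trans_subset (image_mono hpre)

theorem IsMaxChainIn.maximal_isChain_preimage (hf : ∀ a b, r a b ↔ f a ≤ f b) {c : Set β}
    (hc : IsMaxChainIn (range f) c) : Maximal (IsChain r) (f ⁻¹' c) := by
  refine ⟨(isChain_iff_isChain_image hf).2 ((image_preimage_eq_of_subset hc.1.1).symm ▸ hc.1.2),
    fun s hs hcs => image_subset_iff.1 (hc.2 ⟨image_subset_range f s,
      (isChain_iff_isChain_image hf).1 hs⟩ ?_)⟩
  exact (image_preimage_eq_of_subset hc.1.1).symm.trans_subset (image_mono hcs)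

theorem ncard_setOf_maximal_isChain (hf : ∀ a b, r a b ↔ f a ≤ f b) :
    {s | Maximal (IsChain r) s}.ncard = {c | IsMaxChainIn (range f) c}.ncard := by
  have himage : {s | Maximal (IsChain r) s} = preimage f '' {c | IsMaxChainIn (range f) c} := by
    ext s
    refine ⟨fun hs => ⟨f '' s, hs.isMaxChainIn_range_image hf, hs.preimage_image_eq_of_isChain hf⟩,
      ?_⟩
    rintro ⟨c, hc, rfl⟩
    exact hc.maximal_isChain_preimage hf
  rw [himage]
  refine InjOn.ncard_image fun c₁ h₁ c₂ h₂ h => ?_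
  rw [← image_preimage_eq_of_subset h₁.1.1, ← image_preimage_eq_of_subset h₂.1.1]
  exact congrArg _ h

end Transfer

namespace ZMod

variable {n : ℕ}

theorem exists_addMonoidHom_apply_eq_iff_dvd (a b : ZMod n) :
    (∃ f : ZMod n →+ ZMod n, f a = b) ↔ a ∣ b := by
  refine ⟨fun ⟨f, hf⟩ => ⟨f 1, ?_⟩, fun ⟨c, hc⟩ => ⟨AddMonoidHom.mulRight c, hc.symm⟩⟩
  calc b = f (a • 1) := by rw [smul_eq_mul, mul_one, hf]
    _ = a * f 1 := map_smul (f.toZModLinearMap n) a 1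

theorem isClique_endoGraph_iff {s : Set (ZMod n)} :
    (endoGraph (ZMod n)).IsClique s ↔ IsChain (· ∣ ·) s := by
  simp only [SimpleGraph.IsClique, endoGraph, exists_addMonoidHom_apply_eq_iff_dvd]
  exact ⟨fun h a ha b hb hab => (h ha hb hab).2, fun h a ha b hb hab => ⟨hab, h ha hb hab⟩⟩

theorem natCast_dvd_natCast_iff {d e : ℕ} (hd : d ∣ n) : (d : ZMod n) ∣ e ↔ d ∣ e := by
  refine ⟨fun h => ?_, fun h => Nat.cast_dvd_cast h⟩
  have := map_dvd (castHom hd (ZMod d)) h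
  rwa [map_natCast, map_natCast, natCast_self, zero_dvd_iff, natCast_eq_zero_iff] at this

theorem dvd_iff_gcd_val_dvd [NeZero n] {a b : ZMod n} : a ∣ b ↔ a.val.gcd n ∣ b.val.gcd n := by
  have hassoc : ∀ x : ZMod n, x ∣ (x.val.gcd n : ZMod n) ∧ (x.val.gcd n : ZMod n) ∣ x := fun x =>
    ⟨⟨x⁻¹, (mul_inv_eq_gcd x).symm⟩,
      (Nat.cast_dvd_cast (Nat.gcd_dvd_left _ _)).trans (by rw [natCast_zmod_val])⟩
  rw [← natCast_dvd_natCast_iff (Nat.gcd_dvd_right _ _)]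
  exact ⟨fun h => (hassoc a).2.trans (h.trans (hassoc b).1),
    fun h => (hassoc a).1.trans (h.trans (hassoc b).2)⟩

theorem dvd_iff_factorization_gcd_val_le [NeZero n] (a b : ZMod n) :
    a ∣ b ↔ (a.val.gcd n).factorization ≤ (b.val.gcd n).factorization := by
  rw [dvd_iff_gcd_val_dvd, Nat.factorization_le_iff_dvd] <;>
    exact (Nat.gcd_pos_of_pos_right _ (NeZero.pos n)).ne'

theorem range_factorization_gcd_val [NeZero n] :
    range (fun a : ZMod n => (a.val.gcd n).factorization) = Iic n.factorization := by
  ext g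
  refine ⟨?_, fun hg => ⟨((g.prod (· ^ ·) : ℕ) : ZMod n), ?_⟩⟩
  · rintro ⟨a, rfl⟩
    exact (Nat.factorization_le_iff_dvd (Nat.gcd_pos_of_pos_right _ (NeZero.pos n)).ne'
      (NeZero.ne n)).2 (Nat.gcd_dvd_right _ _)
  · dsimp only
    rw [val_natCast, ← Nat.gcd_rec, Nat.gcd_eq_right (Nat.prod_pow_dvd_of_le_factorization hg),
      Nat.factorization_prod_pow_eq_self_of_le_factorization hg]

end ZMod

/-- The number of maximal cliques of `Endo(ZMod n)`, for `n = p₁^{n₁} ⋯ p_k^{n_k}`, is the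
multinomial coefficient `(n₁ + ⋯ + n_k)! / (n₁! ⋯ n_k!)`. -/
theorem endoGraph_zmod_card_maximal_cliques (n : ℕ) (hn : 1 ≤ n) :
    {s : Set (ZMod n) | Maximal (fun t => (endoGraph (ZMod n)).IsClique t) s}.ncard =
      Nat.multinomial n.primeFactors (fun p => n.factorization p) := by
  have : NeZero n := ⟨by omega⟩
  have hclique : (fun t => (endoGraph (ZMod n)).IsClique t) = IsChain (· ∣ ·) :=
    funext fun _ => propext ZMod.isClique_endoGraph_iff
  rw [hclique, ncard_setOf_maximal_isChain ZMod.dvd_iff_factorization_gcd_val_le,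
    ZMod.range_factorization_gcd_val, Finsupp.ncard_setOf_isMaxChainIn_Iic,
    Finsupp.multinomial_eq_of_support_subset (Nat.support_factorization n).le]
end

section
/- Let G be a finite abelian group. The endomorphism graph Endo(G) is complete (i.e., any two distinct elements a, b ∈ G are joined by an endomorphism mapping one to the other) if and only if there exist a prime p, a natural number a ≥ 1, and natural numbers m, n ≥ 0 such that G is isomorphic as an additive group to (ZMod p^a)^m × (ZMod p^{a+1})^n, i.e., Nonempty (G ≃+ (Fin m → ZMod (p^a)) × (Fin n → ZMod (p^(a+1)))). -/
section Reachability

variable {G H : Type*} [AddGroup G] [AddGroup H]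

lemma endoGraph_eq_top_iff :
    endoGraph G = ⊤ ↔ ∀ x y : G, (∃ f : G →+ G, f x = y) ∨ ∃ f : G →+ G, f y = x := by
  refine ⟨fun h x y => ?_, fun h => ?_⟩
  · by_cases hxy : x = y
    · exact Or.inl ⟨AddMonoidHom.id G, hxy⟩
    · have hadj : (endoGraph G).Adj x y := h ▸ hxy
      exact ((SimpleGraph.fromRel_adj _ x y).1 hadj).2
  · ext x y
    simp only [endoGraph, SimpleGraph.fromRel_adj, SimpleGraph.top_adj, and_iff_left_iff_imp]
    exact fun _ => h x y

lemma AddEquiv.endoGraph_eq_top (e : G ≃+ H) (h : endoGraph H = ⊤) : endoGraph G = ⊤ := by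
  rw [endoGraph_eq_top_iff] at h ⊢
  intro x y
  rcases h (e x) (e y) with ⟨f, hf⟩ | ⟨f, hf⟩
  · exact Or.inl ⟨e.symm.toAddMonoidHom.comp (f.comp e.toAddMonoidHom), by simp [hf]⟩
  · exact Or.inr ⟨e.symm.toAddMonoidHom.comp (f.comp e.toAddMonoidHom), by simp [hf]⟩

lemma AddEquiv.endoGraph_eq_top_iff (e : G ≃+ H) : endoGraph G = ⊤ ↔ endoGraph H = ⊤ :=
  ⟨e.symm.endoGraph_eq_top, e.endoGraph_eq_top⟩

lemma addOrderOf_dvd_or_dvd_of_endoGraph_eq_top (h : endoGraph G = ⊤) (x y : G) :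
    addOrderOf y ∣ addOrderOf x ∨ addOrderOf x ∣ addOrderOf y := by
  rcases endoGraph_eq_top_iff.1 h x y with ⟨f, rfl⟩ | ⟨f, rfl⟩
  · exact Or.inl (addOrderOf_map_dvd f x)
  · exact Or.inr (addOrderOf_map_dvd f y)

lemma exists_eq_nsmul_of_endoGraph_eq_top (h : endoGraph G = ⊤) {x z : G} {N : ℕ} (M : ℕ)
    (hx : N • x = 0) (hz : N • M • z ≠ 0) : ∃ w, x = M • w := by
  rcases endoGraph_eq_top_iff.1 h x (M • z) with ⟨f, hf⟩ | ⟨f, hf⟩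
  · exact absurd (by rw [← hf, ← map_nsmul, hx, map_zero]) hz
  · exact ⟨f z, by rw [← hf, map_nsmul]⟩

lemma exists_card_eq_prime_pow_of_endoGraph_eq_top [Finite G] (h : endoGraph G = ⊤) :
    ∃ p k : ℕ, p.Prime ∧ Nat.card G = p ^ k := by
  by_cases h1 : Nat.card G = 1
  · exact ⟨2, 0, Nat.prime_two, h1⟩
  obtain ⟨p, hp, hpG⟩ := Nat.exists_prime_and_dvd h1
  refine ⟨p, _, hp, Nat.eq_prime_pow_of_unique_prime_dvd Nat.card_pos.ne' fun {q} hq hqG => ?_⟩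
  have := Fact.mk hp
  have := Fact.mk hq
  obtain ⟨x, hx⟩ := exists_prime_addOrderOf_dvd_card' p hpG
  obtain ⟨y, hy⟩ := exists_prime_addOrderOf_dvd_card' q hqG
  rcases addOrderOf_dvd_or_dvd_of_endoGraph_eq_top h x y with hd | hd <;> rw [hx, hy] at hd
  · exact (Nat.prime_dvd_prime_iff_eq hq hp).1 hd
  · exact ((Nat.prime_dvd_prime_iff_eq hp hq).1 hd).symm

end Reachability

section ZModVectors

variable {ι : Type*} {p k : ℕ}

lemma ZMod.exists_addMonoidHom_apply_one_eq {n : ℕ} {A : Type*} [AddGroup A] {c : A}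
    (hc : n • c = 0) : ∃ φ : ZMod n →+ A, φ 1 = c := by
  let f : {f : ℤ →+ A // f n = 0} := ⟨zmultiplesHom A c, by simpa using hc⟩
  exact ⟨ZMod.lift n f, by simpa [f] using ZMod.lift_coe n f 1⟩

lemma exists_addMonoidHom_pi_zmod_apply_eq {n : ℕ} {A : Type*} [AddGroup A] {w : ι → ZMod n}
    {i : ι} (hi : IsUnit (w i)) {c : A} (hc : n • c = 0) :
    ∃ φ : (ι → ZMod n) →+ A, φ w = c := by
  obtain ⟨ψ, hψ⟩ := ZMod.exists_addMonoidHom_apply_one_eq hc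
  let u : ZMod n := ↑hi.unit⁻¹
  exact ⟨ψ.comp ((AddMonoidHom.mulRight u).comp (Pi.evalAddMonoidHom _ i)),
    (congrArg ψ hi.mul_val_inv).trans hψ⟩

lemma nsmul_pi_zmod_eq_zero {n N : ℕ} (hN : n ∣ N) (v : ι → ZMod n) : N • v = 0 := by
  ext
  simp [(ZMod.natCast_eq_zero_iff N n).2 hN]

lemma exists_addMonoidHom_pi_zmod_nsmul_apply_eq {n : ℕ} {A : Type*} [AddGroup A]
    {w : ι → ZMod n} (N : ℕ) (hw : ¬n ∣ N → ∃ i, IsUnit (w i)) {c : A} (hc : n • c = 0) :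
    ∃ φ : (ι → ZMod n) →+ A, φ (N • w) = N • c := by
  by_cases hN : n ∣ N
  · refine ⟨0, ?_⟩
    obtain ⟨q, rfl⟩ := hN
    rw [nsmul_pi_zmod_eq_zero (dvd_mul_right n q), map_zero, mul_nsmul, hc, nsmul_zero]
  · obtain ⟨i, hi⟩ := hw hN
    obtain ⟨φ, hφ⟩ := exists_addMonoidHom_pi_zmod_apply_eq hi hc
    exact ⟨φ, by rw [map_nsmul, hφ]⟩

lemma ZMod.exists_eq_prime_mul_of_not_isUnit (hp : p.Prime) {z : ZMod (p ^ k)}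
    (hz : ¬IsUnit z) : ∃ r, z = p * r := by
  have : NeZero (p ^ k) := ⟨pow_ne_zero k hp.ne_zero⟩
  rw [← ZMod.natCast_zmod_val z, ZMod.isUnit_iff_coprime] at hz
  obtain ⟨r, hr⟩ : p ∣ z.val := by
    by_contra hpz
    exact hz (Nat.Coprime.pow_right _ (Nat.coprime_comm.1 (hp.coprime_iff_not_dvd.2 hpz)))
  exact ⟨r, by rw [← ZMod.natCast_zmod_val z, hr, Nat.cast_mul]⟩

lemma exists_eq_prime_pow_nsmul_of_pi_zmod (hp : p.Prime) (u : ι → ZMod (p ^ k)) :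
    ∃ (h : ℕ) (w : ι → ZMod (p ^ k)), u = p ^ h • w ∧ (h < k → ∃ i, IsUnit (w i)) := by
  classical
  let IsDivisible (h : ℕ) : Prop := ∃ w : ι → ZMod (p ^ k), u = p ^ h • w
  obtain ⟨w, hw⟩ : IsDivisible (Nat.findGreatest IsDivisible k) :=
    Nat.findGreatest_spec (Nat.zero_le k) ⟨u, by simp⟩
  refine ⟨_, w, hw, fun hlt => ?_⟩
  by_contra! hnu
  choose r hr using fun i => ZMod.exists_eq_prime_mul_of_not_isUnit hp (hnu i)
  refine Nat.findGreatest_is_greatest (Nat.lt_succ_self _) hlt ⟨r, ?_⟩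
  rw [hw, pow_succ, mul_nsmul']
  ext i
  simp only [Pi.smul_apply, nsmul_eq_mul, Pi.mul_apply, Pi.natCast_apply, hr i]

end ZModVectors

section Model

variable {ι κ : Type*} {p a : ℕ}

lemma exists_addMonoidHom_prod_pi_zmod_apply_eq {h₁ h₂ : ℕ} {w₁ : ι → ZMod (p ^ a)}
    {w₂ : κ → ZMod (p ^ (a + 1))} (hw₁ : h₁ < a → ∃ i, IsUnit (w₁ i))
    (hw₂ : h₂ < a + 1 → ∃ i, IsUnit (w₂ i)) (c : ι → ZMod (p ^ a)) (d : κ → ZMod (p ^ (a + 1))) :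
    ∃ f : ((ι → ZMod (p ^ a)) × (κ → ZMod (p ^ (a + 1)))) →+
        ((ι → ZMod (p ^ a)) × (κ → ZMod (p ^ (a + 1)))),
      f (p ^ h₁ • w₁, p ^ h₂ • w₂) = (p ^ min h₁ h₂ • c, p ^ min (h₁ + 1) h₂ • d) := by
  have lt_of_not_dvd {h k : ℕ} (hpk : ¬p ^ k ∣ p ^ h) : h < k := by
    by_contra! hkh
    exact hpk (pow_dvd_pow p hkh)
  rcases le_or_gt h₂ h₁ with h₂₁ | h₁₂
  · obtain ⟨φ, hφ⟩ := exists_addMonoidHom_pi_zmod_nsmul_apply_eq (p ^ h₂)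
      (fun h => hw₂ (lt_of_not_dvd h)) (c := (c, d))
      (by rw [Prod.smul_mk, nsmul_pi_zmod_eq_zero (pow_dvd_pow p a.le_succ),
        nsmul_pi_zmod_eq_zero dvd_rfl]; rfl)
    refine ⟨φ.comp (AddMonoidHom.snd _ _), ?_⟩
    rw [min_eq_right h₂₁, min_eq_right (by omega)]
    exact hφ
  · obtain ⟨φ, hφ⟩ := exists_addMonoidHom_pi_zmod_nsmul_apply_eq (p ^ h₁)
      (fun h => hw₁ (lt_of_not_dvd h)) (c := (c, p • d))
      (by rw [Prod.smul_mk, nsmul_pi_zmod_eq_zero dvd_rfl, ← mul_nsmul', ← pow_succ,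
        nsmul_pi_zmod_eq_zero dvd_rfl]; rfl)
    refine ⟨φ.comp (AddMonoidHom.fst _ _), ?_⟩
    rw [min_eq_left h₁₂.le, min_eq_left (by omega), pow_succ p h₁, mul_nsmul']
    exact hφ

lemma exists_addMonoidHom_prod_pi_zmod_apply_eq_of_le {h₁ h₂ g₁ g₂ : ℕ}
    {w₁ v₁ : ι → ZMod (p ^ a)} {w₂ v₂ : κ → ZMod (p ^ (a + 1))}
    (hw₁ : h₁ < a → ∃ i, IsUnit (w₁ i)) (hw₂ : h₂ < a + 1 → ∃ i, IsUnit (w₂ i))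
    (hg₁ : min h₁ h₂ ≤ g₁) (hg₂ : min (h₁ + 1) h₂ ≤ g₂) :
    ∃ f : ((ι → ZMod (p ^ a)) × (κ → ZMod (p ^ (a + 1)))) →+
        ((ι → ZMod (p ^ a)) × (κ → ZMod (p ^ (a + 1)))),
      f (p ^ h₁ • w₁, p ^ h₂ • w₂) = (p ^ g₁ • v₁, p ^ g₂ • v₂) := by
  obtain ⟨f, hf⟩ := exists_addMonoidHom_prod_pi_zmod_apply_eq hw₁ hw₂
    (p ^ (g₁ - min h₁ h₂) • v₁) (p ^ (g₂ - min (h₁ + 1) h₂) • v₂)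
  refine ⟨f, ?_⟩
  rwa [← mul_nsmul', ← mul_nsmul', ← pow_add, ← pow_add, Nat.add_sub_cancel' hg₁,
    Nat.add_sub_cancel' hg₂] at hf

theorem endoGraph_prod_pi_zmod_eq_top (hp : p.Prime) :
    endoGraph ((ι → ZMod (p ^ a)) × (κ → ZMod (p ^ (a + 1)))) = ⊤ := by
  rw [endoGraph_eq_top_iff]
  rintro ⟨x₁, x₂⟩ ⟨y₁, y₂⟩
  obtain ⟨h₁, w₁, rfl, hw₁⟩ := exists_eq_prime_pow_nsmul_of_pi_zmod hp x₁
  obtain ⟨h₂, w₂, rfl, hw₂⟩ := exists_eq_prime_pow_nsmul_of_pi_zmod hp x₂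
  obtain ⟨g₁, v₁, rfl, hv₁⟩ := exists_eq_prime_pow_nsmul_of_pi_zmod hp y₁
  obtain ⟨g₂, v₂, rfl, hv₂⟩ := exists_eq_prime_pow_nsmul_of_pi_zmod hp y₂
  rcases (by omega : (min h₁ h₂ ≤ g₁ ∧ min (h₁ + 1) h₂ ≤ g₂) ∨
      (min g₁ g₂ ≤ h₁ ∧ min (g₁ + 1) g₂ ≤ h₂)) with ⟨hg₁, hg₂⟩ | ⟨hh₁, hh₂⟩
  · exact Or.inl (exists_addMonoidHom_prod_pi_zmod_apply_eq_of_le hw₁ hw₂ hg₁ hg₂)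
  · exact Or.inr (exists_addMonoidHom_prod_pi_zmod_apply_eq_of_le hv₁ hv₂ hh₁ hh₂)

end Model

section Structure

variable {ι κ : Type*} {p a : ℕ}

lemma le_add_one_of_endoGraph_pi_zmod_eq_top [DecidableEq ι] (hp : p.Prime) {e : ι → ℕ}
    (h : endoGraph (∀ i, ZMod (p ^ e i)) = ⊤) (i : ι) {j : ι} (hj : e j ≠ 0) :
    e i ≤ e j + 1 := by
  by_contra! hlt
  obtain ⟨d, hd⟩ : ∃ d, e i = e j + 1 + d + 1 := ⟨e i - e j - 2, by omega⟩
  have hx : p ^ e j • Pi.single (M := fun i => ZMod (p ^ e i)) j 1 = 0 := by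
    rw [← Pi.single_nsmul, nsmul_eq_mul, mul_one, ZMod.natCast_self, Pi.single_zero]
  have hz : p ^ e j • p • Pi.single (M := fun i => ZMod (p ^ e i)) i (p ^ d) ≠ 0 := by
    rw [← Pi.single_nsmul, ← Pi.single_nsmul, Ne, Pi.single_eq_zero_iff, nsmul_eq_mul,
      nsmul_eq_mul, ← mul_assoc]
    norm_cast
    rw [← pow_succ, ← pow_add, ZMod.natCast_eq_zero_iff, Nat.pow_dvd_pow_iff_le_right hp.one_lt]
    omega
  obtain ⟨w, hw⟩ := exists_eq_nsmul_of_endoGraph_eq_top h p hx hz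
  have hpw : (1 : ZMod (p ^ e j)) = p * w j := by
    simpa using congrFun hw j
  exact ZMod.prime_natCast_not_isUnit_pow hp (Nat.pos_of_ne_zero hj)
    (IsUnit.of_mul_eq_one _ hpw.symm)

lemma exists_addEquiv_pi_zmod_prime_pow {G : Type*} [AddCommGroup G] [Finite G] {k : ℕ}
    (hp : p.Prime) (hcard : Nat.card G = p ^ k) :
    ∃ (ι : Type) (_ : Fintype ι) (e : ι → ℕ),
      (∀ i, e i ≠ 0) ∧ Nonempty (G ≃+ ∀ i, ZMod (p ^ e i)) := by
  obtain ⟨ι, _, n, hn, ⟨ψ⟩⟩ := AddCommGroup.equiv_directSum_zmod_of_finite' G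
  let ψ' := ψ.trans (DirectSum.addEquivProd _)
  have hpow (i : ι) : ∃ e, e ≠ 0 ∧ n i = p ^ e := by
    have hdvd : n i ∣ p ^ k := by
      rw [← hcard, Nat.card_congr ψ'.toEquiv, Nat.card_pi]
      simpa using Finset.dvd_prod_of_mem (fun i => n i) (Finset.mem_univ i)
    obtain ⟨e, -, he⟩ := (Nat.dvd_prime_pow hp).1 hdvd
    exact ⟨e, by rintro rfl; simpa [he] using hn i, he⟩
  choose e he hne using hpow
  exact ⟨ι, inferInstance, e, he,
    ⟨ψ'.trans (AddEquiv.piCongrRight fun i => (ZMod.ringEquivCongr (hne i)).toAddEquiv)⟩⟩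

lemma exists_forall_eq_or_eq_add_one [Finite ι] {e : ι → ℕ} (he : ∀ i, e i ≠ 0)
    (hle : ∀ i j, e i ≤ e j + 1) : ∃ a, 1 ≤ a ∧ ∀ i, e i = a ∨ e i = a + 1 := by
  rcases isEmpty_or_nonempty ι with hι | hι
  · exact ⟨1, le_rfl, isEmptyElim⟩
  · obtain ⟨j, hj⟩ := Finite.exists_min e
    exact ⟨e j, Nat.one_le_iff_ne_zero.2 (he j), fun i => by have := hj i; have := hle i j; omega⟩

noncomputable def piZModEquivFin [Fintype κ] {n : κ → ℕ} {b : ℕ} (hn : ∀ k, n k = b) :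
    (∀ k, ZMod (n k)) ≃+ (Fin (Fintype.card κ) → ZMod b) :=
  (AddEquiv.piCongrRight fun k => (ZMod.ringEquivCongr (hn k)).toAddEquiv).trans
    (AddEquiv.arrowCongr (Fintype.equivFin κ) (AddEquiv.refl _))

lemma exists_pi_zmod_addEquiv_prod [Finite ι] {e : ι → ℕ} (he : ∀ i, e i = a ∨ e i = a + 1) :
    ∃ m n : ℕ, Nonempty ((∀ i, ZMod (p ^ e i)) ≃+
      (Fin m → ZMod (p ^ a)) × (Fin n → ZMod (p ^ (a + 1)))) := by
  classical
  have := Fintype.ofFinite ι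
  exact ⟨_, _, ⟨(RingEquiv.piEquivPiSubtypeProd (fun i => e i = a) _).toAddEquiv.trans
    ((piZModEquivFin fun i => by rw [i.2]).prodCongr
      (piZModEquivFin fun i => by rw [(he i).resolve_left i.2]))⟩⟩

end Structure

/-- The endomorphism graph of a finite abelian group `G` is complete iff
`G ≃ (ZMod p^a)^m × (ZMod p^{a+1})^n` for some prime `p`, `a ≥ 1` and `m, n ≥ 0`. -/
theorem endoGraph_complete_iff (G : Type*) [AddCommGroup G] [Finite G] :
    endoGraph G = ⊤ ↔
      ∃ (p a m n : ℕ), p.Prime ∧ 1 ≤ a ∧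
        Nonempty (G ≃+ (Fin m → ZMod (p ^ a)) × (Fin n → ZMod (p ^ (a + 1)))) := by
  classical
  refine ⟨fun h => ?_, fun ⟨p, a, m, n, hp, _, ⟨ψ⟩⟩ =>
    ψ.endoGraph_eq_top_iff.2 (endoGraph_prod_pi_zmod_eq_top hp)⟩
  obtain ⟨p, k, hp, hcard⟩ := exists_card_eq_prime_pow_of_endoGraph_eq_top h
  obtain ⟨ι, _, e, he, ⟨χ⟩⟩ := exists_addEquiv_pi_zmod_prime_pow hp hcard
  obtain ⟨a, ha, hea⟩ := exists_forall_eq_or_eq_add_one he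
    fun i j => le_add_one_of_endoGraph_pi_zmod_eq_top hp (χ.endoGraph_eq_top_iff.1 h) i (he j)
  obtain ⟨m, n, ⟨θ⟩⟩ := exists_pi_zmod_addEquiv_prod (p := p) hea
  exact ⟨p, a, m, n, hp, ha, ⟨χ.trans θ⟩⟩
end

section
/- Let p be a prime and let a, b be natural numbers with b ≥ 1 and a > b + 1. In the additive group G = ZMod (p^a) × ZMod (p^b), consider g₁ = (p, 0) and g₂ = (0, 1). Then there is no additive group endomorphism f : G →+ G with f(g₁) = g₂, and there is no additive group endomorphism f : G →+ G with f(g₂) = g₁. Consequently, the endomorphism graph of G is not complete. -/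
/-!
Every image of `(p, 0) = p • (1, 0)` is divisible by `p`, while the second coordinate `1` of
`(0, 1)` is not divisible by `p` in `ZMod (p ^ b)`. Conversely, an endomorphism cannot raise
additive orders, and `(0, 1)` has order `p ^ b` while `(p, 0)` has the larger order `p ^ (a - 1)`.
-/

theorem ZMod.nsmul_ne_one_of_dvd {m n : ℕ} (hm : m ≠ 1) (hmn : m ∣ n) (z : ZMod n) :
    m • z ≠ 1 := by
  intro h
  rw [nsmul_eq_mul] at h
  exact hm ((ZMod.isUnit_iff_coprime m n).mp (.of_mul_eq_one z h) |>.eq_one_of_dvd hmn)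

theorem ZMod.addOrderOf_natCast_pow_succ {p : ℕ} (hp : p ≠ 0) (k : ℕ) :
    addOrderOf (p : ZMod (p ^ (k + 1))) = p ^ k := by
  rw [ZMod.addOrderOf_coe p (pow_ne_zero _ hp), Nat.gcd_eq_right (dvd_pow_self p k.succ_ne_zero),
    pow_succ, Nat.mul_div_cancel _ (Nat.pos_of_ne_zero hp)]

theorem endoGraph_ne_top_of_not_exists {G : Type*} [AddGroup G] {x y : G}
    (hxy : ¬ ∃ f : G →+ G, f x = y) (hyx : ¬ ∃ f : G →+ G, f y = x) : endoGraph G ≠ ⊤ := by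
  intro htop
  have hadj : (endoGraph G).Adj x y := by
    rw [htop, SimpleGraph.top_adj]
    rintro rfl
    exact hxy ⟨.id G, rfl⟩
  rw [endoGraph, SimpleGraph.fromRel_adj] at hadj
  exact hadj.2.elim hxy hyx

/-- In `G = ZMod (p^a) × ZMod (p^b)` with `b ≥ 1` and `a > b + 1`, no endomorphism maps
`g₁ = (p, 0)` to `g₂ = (0, 1)` or vice versa; hence `Endo(G)` is not complete. -/
theorem endoGraph_not_complete (p : ℕ) (hp : p.Prime) (a b : ℕ) (hb : 1 ≤ b)
    (hab : a > b + 1) :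
    (¬ ∃ f : ZMod (p ^ a) × ZMod (p ^ b) →+ ZMod (p ^ a) × ZMod (p ^ b),
        f ((p : ZMod (p ^ a)), (0 : ZMod (p ^ b))) = ((0 : ZMod (p ^ a)), (1 : ZMod (p ^ b)))) ∧
    (¬ ∃ f : ZMod (p ^ a) × ZMod (p ^ b) →+ ZMod (p ^ a) × ZMod (p ^ b),
        f ((0 : ZMod (p ^ a)), (1 : ZMod (p ^ b))) = ((p : ZMod (p ^ a)), (0 : ZMod (p ^ b)))) ∧
    endoGraph (ZMod (p ^ a) × ZMod (p ^ b)) ≠ ⊤ := by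
  have h₁ : ¬ ∃ f : ZMod (p ^ a) × ZMod (p ^ b) →+ ZMod (p ^ a) × ZMod (p ^ b),
      f ((p : ZMod (p ^ a)), (0 : ZMod (p ^ b))) = ((0 : ZMod (p ^ a)), (1 : ZMod (p ^ b))) := by
    rintro ⟨f, hf⟩
    have hp_smul : ((p : ZMod (p ^ a)), (0 : ZMod (p ^ b))) = p • (1, 0) := by simp
    rw [hp_smul, map_nsmul] at hf
    exact ZMod.nsmul_ne_one_of_dvd hp.ne_one (dvd_pow_self p (by omega)) _ (congrArg Prod.snd hf)
  have h₂ : ¬ ∃ f : ZMod (p ^ a) × ZMod (p ^ b) →+ ZMod (p ^ a) × ZMod (p ^ b),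
      f ((0 : ZMod (p ^ a)), (1 : ZMod (p ^ b))) = ((p : ZMod (p ^ a)), (0 : ZMod (p ^ b))) := by
    rintro ⟨f, hf⟩
    obtain ⟨k, rfl⟩ : ∃ k, a = k + 1 := ⟨a - 1, by omega⟩
    have hdvd := addOrderOf_map_dvd f (0, 1)
    rw [hf, Prod.addOrderOf_mk, Prod.addOrderOf_mk, ZMod.addOrderOf_natCast_pow_succ hp.ne_zero,
      ZMod.addOrderOf_one, addOrderOf_zero, addOrderOf_zero, Nat.lcm_one_right,
      Nat.lcm_one_left, Nat.pow_dvd_pow_iff_le_right hp.one_lt] at hdvd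
    omega
  exact ⟨h₁, h₂, endoGraph_ne_top_of_not_exists h₁ h₂⟩
end

section
/- Let p be a prime and u, v ≥ 1 natural numbers. In the additive group G = ZMod (p^(u+v)) × ZMod (p^u), the elements a = (p^v, 0) and b = (0, 1) have equal additive order (namely p^u), yet there is no additive group endomorphism f : G →+ G with f(a) = b. -/
/-- In `G = ZMod (p^(u+v)) × ZMod (p^u)` (`p` prime, `u, v ≥ 1`), the elements `a = (p^v, 0)` and
`b = (0, 1)` both have additive order `p^u`, yet no endomorphism of `G` maps `a` to `b`. -/
theorem no_endo_despite_equal_order (p : ℕ) (hp : p.Prime) (u v : ℕ) (hu : 1 ≤ u) (hv : 1 ≤ v) :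
    addOrderOf (((p : ZMod (p ^ (u + v))) ^ v, (0 : ZMod (p ^ u)))) = p ^ u ∧
    addOrderOf (((0 : ZMod (p ^ (u + v))), (1 : ZMod (p ^ u)))) = p ^ u ∧
    ¬ ∃ f : ZMod (p ^ (u + v)) × ZMod (p ^ u) →+ ZMod (p ^ (u + v)) × ZMod (p ^ u),
        f (((p : ZMod (p ^ (u + v))) ^ v, (0 : ZMod (p ^ u)))) =
          ((0 : ZMod (p ^ (u + v))), (1 : ZMod (p ^ u))) := by
  have hp1 : 1 < p := hp.one_lt
  have hpu : p ^ u ≠ 0 := pow_ne_zero _ hp.pos.ne'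
  have hpuv : p ^ (u + v) ≠ 0 := pow_ne_zero _ hp.pos.ne'
  have h1 : addOrderOf ((1 : ZMod (p ^ u))) = p ^ u := by
    exact ZMod.addOrderOf_one (p ^ u)
  have horda : addOrderOf (((p : ZMod (p ^ (u + v))) ^ v)) = p ^ u := by
    have : ((p : ZMod (p ^ (u + v))) ^ v) = ((p ^ v : ℕ) : ZMod (p ^ (u + v))) := by
      push_cast; ring
    rw [this, ZMod.addOrderOf_coe _ hpuv,
      Nat.gcd_eq_right (pow_dvd_pow p (Nat.le_add_left v u)),
      pow_add, Nat.mul_div_cancel _ (pow_pos hp.pos v)]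
  refine ⟨?_, ?_, ?_⟩
  · rw [Prod.addOrderOf]
    simp [horda]
  · rw [Prod.addOrderOf]
    simp [h1]
  · rintro ⟨f, hf⟩
    have key : ((p ^ v : ℕ) : ZMod (p ^ u)) * (f (1, 0)).2 = 1 := by
      have : f ((p ^ v : ℕ) • ((1 : ZMod (p ^ (u + v))), (0 : ZMod (p ^ u)))) =
          ((0 : ZMod (p ^ (u + v))), (1 : ZMod (p ^ u))) := by
        convert hf using 2
        simp [Prod.smul_def, nsmul_eq_mul]
      rw [map_nsmul] at this
      have h2 := congrArg Prod.snd this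
      simpa [Prod.smul_def, nsmul_eq_mul] using h2
    -- cast down to ZMod p
    have hdvd : p ∣ p ^ u := dvd_pow_self p (Nat.one_le_iff_ne_zero.mp hu)
    have := congrArg (ZMod.castHom hdvd (ZMod p)) key
    rw [map_mul, map_one, map_natCast] at this
    haveI hfact : Fact p.Prime := ⟨hp⟩
    have hz : ((p ^ v : ℕ) : ZMod p) = 0 := by
      push_cast
      rw [ZMod.natCast_self]
      exact zero_pow (by omega)
    rw [hz, zero_mul] at this
    exact zero_ne_one this
end

section
/- Let G be a finite nontrivial abelian group. Then the following are equivalent: (i) for all a, b ∈ G with a ≠ 0 and b ≠ 0 there exists an additive group endomorphism f : G →+ G with f(a) = b (i.e., the identity-deleted directed endomorphism graph of G is a complete digraph, equivalently strongly connected); (ii) there exist a prime p and k ≥ 1 such that G is isomorphic as an additive group to (ZMod p)^k, i.e., Nonempty (G ≃+ (Fin k → ZMod p)). -/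
/-- For a finite nontrivial abelian group `G`, the identity-deleted directed endomorphism graph
is a complete digraph (equivalently, strongly connected) iff `G ≃ (ZMod p)^k` for some prime
`p` and `k ≥ 1`. -/
theorem endo_deleted_complete_iff (G : Type*) [AddCommGroup G] [Finite G] [Nontrivial G] :
    (∀ a b : G, a ≠ 0 → b ≠ 0 → ∃ f : G →+ G, f a = b) ↔
      ∃ (p k : ℕ), p.Prime ∧ 1 ≤ k ∧ Nonempty (G ≃+ (Fin k → ZMod p)) := by
  constructor
  · intro h
    obtain ⟨a, ha⟩ := exists_ne (0 : G)
    set n := addOrderOf a with hn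
    have horder : ∀ b : G, b ≠ 0 → addOrderOf b = n := by
      intro b hb
      obtain ⟨f, hf⟩ := h a b ha hb
      obtain ⟨g, hg⟩ := h b a hb ha
      refine Nat.dvd_antisymm ?_ ?_
      · rw [← hf]; exact addOrderOf_map_dvd f a
      · rw [hn, ← hg]; exact addOrderOf_map_dvd g b
    have hn1 : n ≠ 1 := by
      simpa [hn, AddMonoid.addOrderOf_eq_one_iff] using ha
    have hnpos : 0 < n := addOrderOf_pos a
    have hq := Nat.minFac_prime hn1
    set q := n.minFac with hq'
    have hqdvd : q ∣ n := Nat.minFac_dvd n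
    have hb0 : (n / q) • a ≠ 0 := by
      intro hcon
      have : n ∣ n / q := addOrderOf_dvd_of_nsmul_eq_zero hcon
      have hlt : n / q < n := Nat.div_lt_self hnpos hq.one_lt
      exact absurd (Nat.le_of_dvd (Nat.div_pos (Nat.minFac_le hnpos) hq.pos) this)
        (not_le.mpr hlt)
    have hqb : q • ((n / q) • a) = 0 := by
      rw [← mul_nsmul, Nat.div_mul_cancel hqdvd, hn, addOrderOf_nsmul_eq_zero]
    have hdvd : n ∣ q := by
      rw [← horder _ hb0]
      exact addOrderOf_dvd_of_nsmul_eq_zero hqb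
    have hnq : n = q := Nat.dvd_antisymm hdvd hqdvd
    have hprime : n.Prime := hnq ▸ hq
    have hall : ∀ x : G, n • x = 0 := by
      intro x
      rcases eq_or_ne x 0 with rfl | hx
      · simp
      · rw [← horder x hx, addOrderOf_nsmul_eq_zero]
    haveI : Module (ZMod n) G := AddCommGroup.zmodModule hall
    haveI := Fact.mk hprime
    haveI : Module.Finite (ZMod n) G := Module.Finite.of_finite
    refine ⟨n, Module.finrank (ZMod n) G, hprime, Module.finrank_pos, ?_⟩
    exact ⟨(Module.finBasis (ZMod n) G).equivFun.toAddEquiv⟩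
  · rintro ⟨p, k, hp, hk, ⟨e⟩⟩ a b ha hb
    haveI := Fact.mk hp
    have ha' : e a ≠ 0 := by simpa using ha
    obtain ⟨i, hi⟩ : ∃ i, e a i ≠ 0 := by
      by_contra hcon
      push_neg at hcon
      exact ha' (funext hcon)
    let φ : (Fin k → ZMod p) →ₗ[ZMod p] ZMod p := (e a i)⁻¹ • LinearMap.proj i
    let g : (Fin k → ZMod p) →ₗ[ZMod p] (Fin k → ZMod p) := φ.smulRight (e b)
    refine ⟨(e.symm.toAddMonoidHom.comp g.toAddMonoidHom).comp e.toAddMonoidHom, ?_⟩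
    have : g (e a) = e b := by
      simp [g, φ, LinearMap.smulRight_apply, inv_mul_cancel₀ hi]
    simp [this]
end
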